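/- Let X ⊂ ℝ^d be a compact convex set with X ⊆ R̄·B_d, let F : X → ℝ be continuously differentiable, M > 0 and δ ∈ (0,1). Define 𝔤(x;M) := M·(x − P_X[x − (1/M)∇F(x)]) and 𝔤_δ(x;M) := M·(x − P_{(1−δ)X}[x − (1/M)∇F(x)]). Then for every x ∈ X: ‖𝔤(x;M)‖² ≤ (5/4)·‖𝔤_δ(x;M)‖² + 5·δ²·M²·R̄². -/

import Mathlib

open MeasureTheory ProbabilityTheory Real Set Filter Pointwise
open scoped Classical ENNReal RealInnerProductSpace

noncomputable section

variable {d : ℕ}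

/-- Euclidean metric projection onto a set: a nearest point of `C`, if one exists. -/
noncomputable def metricProj (C : Set (EuclideanSpace ℝ (Fin d)))
    (x : EuclideanSpace ℝ (Fin d)) : EuclideanSpace ℝ (Fin d) :=
  if h : ∃ y, y ∈ C ∧ ∀ c ∈ C, dist x y ≤ dist x c then h.choose else x

/-- The standard Gaussian measure `N(0, I_d)` on `ℝ^d`. -/
noncomputable def stdGaussian (d : ℕ) : Measure (EuclideanSpace ℝ (Fin d)) :=
  (Measure.pi fun _ : Fin d => gaussianReal 0 1).map
    (MeasurableEquiv.toLp 2 (Fin d → ℝ))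

/-- The uniform distribution on the sphere of radius `√d` in `ℝ^d`,
realized as the pushforward of the standard Gaussian under radial normalization. -/
noncomputable def uniformSphere (d : ℕ) : Measure (EuclideanSpace ℝ (Fin d)) :=
  (stdGaussian d).map (fun z => (Real.sqrt d / ‖z‖) • z)

/-- The set `S(x,r) = {(s - x)/r : s ∈ X}`. -/
def sShift (X : Set (EuclideanSpace ℝ (Fin d))) (x : EuclideanSpace ℝ (Fin d)) (r : ℝ) :
    Set (EuclideanSpace ℝ (Fin d)) :=
  (fun s => r⁻¹ • (s - x)) '' X

/-- The law `Z(x,r)` of the Gaussian perturbation projected onto `S(x,r)`. -/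
noncomputable def zDist (X : Set (EuclideanSpace ℝ (Fin d))) (x : EuclideanSpace ℝ (Fin d))
    (r : ℝ) : Measure (EuclideanSpace ℝ (Fin d)) :=
  (stdGaussian d).map (metricProj (sShift X x r))

/-- `h` is `Λ`-Lipschitz on `X`. -/
def LipOn (h : EuclideanSpace ℝ (Fin d) → ℝ) (Λ : ℝ)
    (X : Set (EuclideanSpace ℝ (Fin d))) : Prop :=
  ∀ x ∈ X, ∀ y ∈ X, |h x - h y| ≤ Λ * ‖x - y‖

/-- `h` is `L`-smooth on `X`: differentiable with `L`-Lipschitz gradient on `X`. -/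
def IsSmoothOn (h : EuclideanSpace ℝ (Fin d) → ℝ) (L : ℝ)
    (X : Set (EuclideanSpace ℝ (Fin d))) : Prop :=
  Differentiable ℝ h ∧ ∀ x ∈ X, ∀ y ∈ X, ‖gradient h x - gradient h y‖ ≤ L * ‖x - y‖

/-- The gradient mapping `𝔤(x; M) = M (x - P_X[x - (1/M) ∇F(x)])`. -/
noncomputable def gradMap (X : Set (EuclideanSpace ℝ (Fin d)))
    (F : EuclideanSpace ℝ (Fin d) → ℝ) (M : ℝ) (x : EuclideanSpace ℝ (Fin d)) :
    EuclideanSpace ℝ (Fin d) :=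
  M • (x - metricProj X (x - (1 / M) • gradient F x))

/-- The 2-ZFGD iterates, given a realization `zbar` of the Gaussian samples. -/
noncomputable def zfgd (X : Set (EuclideanSpace ℝ (Fin d))) (δ η : ℝ) (r : ℕ → ℝ)
    (f φ : EuclideanSpace ℝ (Fin d) → ℝ) (zbar : ℕ → EuclideanSpace ℝ (Fin d))
    (x0 : EuclideanSpace ℝ (Fin d)) : ℕ → EuclideanSpace ℝ (Fin d)
  | 0 => x0
  | k + 1 =>
    let x := zfgd X δ η r f φ zbar x0 k
    let z := metricProj (sShift X x (r k)) (zbar k)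
    metricProj ((1 - δ) • X)
      (x - η • (gradient f x + ((φ (x + r k • z) - φ x) / r k) • z))

/-- The box `Π_β [l β, u β] ⊆ ℝ^d`. -/
def box (l u : Fin d → ℝ) : Set (EuclideanSpace ℝ (Fin d)) :=
  {x | ∀ β, x β ∈ Set.Icc (l β) (u β)}

/-- `h` is `(L 1, …, L d)`-coordinatewise smooth on `X`. -/
def CoordSmoothOn (h : EuclideanSpace ℝ (Fin d) → ℝ) (L : Fin d → ℝ)
    (X : Set (EuclideanSpace ℝ (Fin d))) : Prop :=
  Differentiable ℝ h ∧ ∀ (β : Fin d), ∀ x ∈ X, ∀ t : ℝ,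
    x + t • EuclideanSpace.single β 1 ∈ X →
    |gradient h (x + t • EuclideanSpace.single β 1) β - gradient h x β| ≤ L β * |t|

/-- Joint law of a pair: uniform coordinate on `Fin d` and uniform sign on `{-1, 1}`. -/
noncomputable def unifPair (d : ℕ) : Measure (Fin d × ℝ) :=
  (((d : ℝ≥0∞)⁻¹ • Measure.count : Measure (Fin d))).prod
    (((2 : ℝ≥0∞)⁻¹ • (Measure.dirac (-1) + Measure.dirac 1) : Measure ℝ))

/-- The RZFCD iterates, given realizations `a` of the coordinate draws and `s` of the
sign draws. -/
noncomputable def rzfcd (l u η : Fin d → ℝ) (r : Fin d → ℕ → ℝ)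
    (f φ : EuclideanSpace ℝ (Fin d) → ℝ)
    (a : ℕ → Fin d) (s : ℕ → ℝ) (x0 : EuclideanSpace ℝ (Fin d)) :
    ℕ → EuclideanSpace ℝ (Fin d)
  | 0 => x0
  | k + 1 =>
    let x := rzfcd l u η r f φ a s x0 k
    let β := a k
    let z : ℝ := if u β < x β + r β k then -1 else if x β - r β k < l β then 1 else s k
    let g : ℝ := gradient f x β +
      ((φ (x + (r β k * z) • EuclideanSpace.single β 1) - φ x) / r β k) * z
    WithLp.toLp 2 (Function.update x β (max (l β) (min (u β) (x β - η β * g))))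

/-! With `y = x - M⁻¹ ∇F(x)`, the two gradient mappings differ by `M (P_{(1-δ)X} y - P_X y)`.
Writing `P_{(1-δ)X} y = (1-δ) s` with `s ∈ X`, the variational inequalities of the two
projections, tested at `s` and at `(1-δ) P_X y`, give `‖P_X y - (1-δ) s‖ ≤ |δ| ‖s‖ ≤ |δ| R̄`, and
`(a + b)² ≤ 5/4 a² + 5 b²` finishes. -/

theorem norm_sub_smul_sq_le_of_inner_nonpos {E : Type*} [NormedAddCommGroup E]
    [InnerProductSpace ℝ E] {y p s : E} {δ : ℝ} (hp : ⟪y - p, s - p⟫ ≤ 0)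
    (hs : ⟪y - (1 - δ) • s, p - s⟫ ≤ 0) :
    ‖p - (1 - δ) • s‖ ^ 2 ≤ δ ^ 2 * ‖s‖ ^ 2 := by
  have hs' : 0 ≤ ⟪y - (1 - δ) • s, s - p⟫ := by
    rw [← neg_sub p s, inner_neg_right]; linarith
  have hkey : ‖s - p‖ ^ 2 ≤ δ * ⟪s, s - p⟫ := by
    have h : ⟪(s - p) - δ • s, s - p⟫ ≤ 0 := by
      rw [show (s - p) - δ • s = (y - p) - (y - (1 - δ) • s) by module, inner_sub_left]
      linarith
    rwa [inner_sub_left, real_inner_self_eq_norm_sq, real_inner_smul_left, sub_nonpos] at h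
  calc ‖p - (1 - δ) • s‖ ^ 2 = ‖δ • s - (s - p)‖ ^ 2 := by congr 2; module
    _ = δ ^ 2 * ‖s‖ ^ 2 - 2 * (δ * ⟪s, s - p⟫) + ‖s - p‖ ^ 2 := by
      rw [norm_sub_sq_real, norm_smul, real_inner_smul_left, Real.norm_eq_abs, mul_pow, sq_abs]
    _ ≤ δ ^ 2 * ‖s‖ ^ 2 := by nlinarith [sq_nonneg ‖s - p‖]

section metricProj

variable {C : Set (EuclideanSpace ℝ (Fin d))}

theorem metricProj_spec (hC : IsClosed C) (hne : C.Nonempty) (x : EuclideanSpace ℝ (Fin d)) :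
    metricProj C x ∈ C ∧ ∀ c ∈ C, dist x (metricProj C x) ≤ dist x c := by
  obtain ⟨y, hy, hxy⟩ := hC.exists_infDist_eq_dist hne x
  have hex : ∃ y, y ∈ C ∧ ∀ c ∈ C, dist x y ≤ dist x c :=
    ⟨y, hy, fun c hc => hxy ▸ Metric.infDist_le_dist_of_mem hc⟩
  rw [metricProj, dif_pos hex]
  exact hex.choose_spec

theorem inner_sub_metricProj_nonpos (hC : IsClosed C) (hconv : Convex ℝ C) (hne : C.Nonempty)
    (x : EuclideanSpace ℝ (Fin d)) {c : EuclideanSpace ℝ (Fin d)} (hc : c ∈ C) :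
    ⟪x - metricProj C x, c - metricProj C x⟫ ≤ 0 := by
  obtain ⟨hmem, hmin⟩ := metricProj_spec hC hne x
  refine (norm_eq_iInf_iff_real_inner_le_zero hconv hmem).1 ?_ c hc
  have : Nonempty C := hne.to_subtype
  have hbdd : BddBelow (range fun w : C => ‖x - w‖) :=
    ⟨0, by rintro _ ⟨w, rfl⟩; exact norm_nonneg _⟩
  refine le_antisymm (le_ciInf fun w => ?_) (ciInf_le hbdd ⟨_, hmem⟩)
  rw [← dist_eq_norm]
  exact hmin w w.2

theorem metricProj_sub_metricProj_smul_sq_le (hC : IsClosed C) (hconv : Convex ℝ C)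
    (hne : C.Nonempty) {R δ : ℝ} (hR : C ⊆ Metric.closedBall 0 R) (hδ : δ < 1)
    (y : EuclideanSpace ℝ (Fin d)) :
    ‖metricProj C y - metricProj ((1 - δ) • C) y‖ ^ 2 ≤ δ ^ 2 * R ^ 2 := by
  have hδ' : 0 < 1 - δ := sub_pos.2 hδ
  have hC' : IsClosed ((1 - δ) • C) := hC.smul_of_ne_zero hδ'.ne'
  have hp := (metricProj_spec hC hne y).1
  have hq := inner_sub_metricProj_nonpos hC' (hconv.smul _) hne.smul_set y
    (smul_mem_smul_set hp)
  obtain ⟨s, hs, hps⟩ := (metricProj_spec hC' hne.smul_set y).1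
  rw [← hps, ← smul_sub, real_inner_smul_right] at hq
  rw [← hps]
  calc _ ≤ δ ^ 2 * ‖s‖ ^ 2 :=
        norm_sub_smul_sq_le_of_inner_nonpos (inner_sub_metricProj_nonpos hC hconv hne y hs)
          (nonpos_of_mul_nonpos_right hq hδ')
    _ ≤ δ ^ 2 * R ^ 2 := by
      gcongr
      simpa using hR hs

end metricProj

theorem gradMap_shrink_comparison_general (d : ℕ) (Rhigh : ℝ)
    (X : Set (EuclideanSpace ℝ (Fin d))) (hXc : IsCompact X) (hXconv : Convex ℝ X)
    (hXu : X ⊆ Metric.closedBall 0 Rhigh)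
    (F : EuclideanSpace ℝ (Fin d) → ℝ)
    (M : ℝ) (δ : ℝ) (hδ1 : δ < 1) :
    ∀ x ∈ X,
      ‖gradMap X F M x‖ ^ 2 ≤
        (5 / 4) * ‖gradMap ((1 - δ) • X) F M x‖ ^ 2 + 5 * δ ^ 2 * M ^ 2 * Rhigh ^ 2 := by
  intro x hx
  set y := x - (1 / M) • gradient F x
  set shift := M • (metricProj ((1 - δ) • X) y - metricProj X y)
  have hdecomp : gradMap X F M x = gradMap ((1 - δ) • X) F M x + shift := by
    simp only [gradMap, shift]
    module
  have hshift : ‖shift‖ ^ 2 ≤ δ ^ 2 * M ^ 2 * Rhigh ^ 2 := by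
    have := metricProj_sub_metricProj_smul_sq_le hXc.isClosed hXconv ⟨x, hx⟩ hXu hδ1 y
    rw [norm_smul, mul_pow, Real.norm_eq_abs, sq_abs, norm_sub_rev]
    nlinarith [sq_nonneg M]
  calc ‖gradMap X F M x‖ ^ 2 ≤ (‖gradMap ((1 - δ) • X) F M x‖ + ‖shift‖) ^ 2 := by
        rw [hdecomp]
        gcongr
        exact norm_add_le _ _
    _ ≤ (5 / 4) * ‖gradMap ((1 - δ) • X) F M x‖ ^ 2 + 5 * ‖shift‖ ^ 2 := by
        nlinarith [sq_nonneg (‖gradMap ((1 - δ) • X) F M x‖ - 4 * ‖shift‖)]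
    _ ≤ _ := by linarith

/-- Lemma 10 (comparison of the gradient mappings for `X` and the shrunk set `(1-δ)X`). -/
theorem gradMap_shrink_comparison (d : ℕ) (Rhigh : ℝ)
    (X : Set (EuclideanSpace ℝ (Fin d))) (hXc : IsCompact X) (hXconv : Convex ℝ X)
    (hXu : X ⊆ Metric.closedBall 0 Rhigh)
    (F : EuclideanSpace ℝ (Fin d) → ℝ) (hF : ContDiff ℝ 1 F)
    (M : ℝ) (hM : 0 < M) (δ : ℝ) (hδ0 : 0 < δ) (hδ1 : δ < 1) :
    ∀ x ∈ X,
      ‖gradMap X F M x‖ ^ 2 ≤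
        (5 / 4) * ‖gradMap ((1 - δ) • X) F M x‖ ^ 2 + 5 * δ ^ 2 * M ^ 2 * Rhigh ^ 2 :=
  gradMap_shrink_comparison_general d Rhigh X hXc hXconv hXu F M δ hδ1
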